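/- arXiv:1509.01887 — 7 statements merged into one kernel-verified Lean document; each statement's English description precedes it below -/
import Mathlib

section
/- Let u, v be positive real numbers with u/v irrational, satisfying u+v = α and 1/u+1/v = β for positive integers α, β. Then for every positive integer t, the number of lattice points (x,y) ∈ ℤ_{≥0}² with ux + vy ≤ t equals (t²β + tαβ + zβ(α−z) + 2ασ(t))/(2α), where z = t mod α and σ(t) = 1 if α divides t and 0 otherwise. -/
/-- Lattice point count of the dilate of the triangle with vertices
`(0,0), (1/u,0), (0,1/v)`: nonnegative integer solutions of `u*x + v*y ≤ t`. -/
noncomputable def ehrhart (u v : ℝ) (t : ℕ) : ℕ :=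
  {p : ℕ × ℕ | u * p.1 + v * p.2 ≤ t}.ncard

/-!
Removing the lattice points on the two legs of the triangle `u x + v y ≤ s` leaves the triangle
for `s - (u + v)` translated by `(1, 1)`, so `I(t) = ⌊t/u⌋ + ⌊t/v⌋ + 1 + I(t - α)`, where `I`
vanishes at negative arguments. As `t/u + t/v = tβ` with `t/u` irrational for `t > 0`, the legs
carry exactly `tβ` lattice points, and the quasi-polynomial of the theorem satisfies the same
recursion with the same initial values `I(t) = tβ + [t = 0]` for `t < α`.
-/

open Set

lemma ncard_eq_ncard_fst_zero_add_ncard_fst_succ {s : Set (ℕ × ℕ)} (hs : s.Finite) :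
    s.ncard = {y | (0, y) ∈ s}.ncard + {p : ℕ × ℕ | (p.1 + 1, p.2) ∈ s}.ncard := by
  have hsplit : s = (Prod.mk 0 '' {y | (0, y) ∈ s}) ∪
      ((fun p : ℕ × ℕ => (p.1 + 1, p.2)) '' {p | (p.1 + 1, p.2) ∈ s}) := by
    ext ⟨x, y⟩
    cases x <;> simp
  have hinj : Function.Injective fun p : ℕ × ℕ => (p.1 + 1, p.2) :=
    Nat.succ_injective.prodMap Function.injective_id
  rw [hsplit] at hs
  rw [hsplit, ncard_union_eq _ (hs.subset subset_union_left) (hs.subset subset_union_right),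
    ncard_image_of_injective _ (Prod.mk_right_injective 0), ncard_image_of_injective _ hinj]
  · simp
  rw [Set.disjoint_left]
  rintro _ ⟨y, -, rfl⟩ ⟨p, -, h⟩
  simp at h

lemma ncard_eq_ncard_snd_zero_add_ncard_snd_succ {s : Set (ℕ × ℕ)} (hs : s.Finite) :
    s.ncard = {x | (x, 0) ∈ s}.ncard + {p : ℕ × ℕ | (p.1, p.2 + 1) ∈ s}.ncard := by
  have hswap {t : Set (ℕ × ℕ)} : (Prod.swap ⁻¹' t).ncard = t.ncard :=
    ncard_preimage_of_injective_subset_range Prod.swap_injective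
      (Prod.swap_surjective.range_eq ▸ subset_univ t)
  rw [← hswap, ncard_eq_ncard_fst_zero_add_ncard_fst_succ (hs.preimage Prod.swap_injective.injOn),
    ← hswap (t := {p : ℕ × ℕ | (p.1, p.2 + 1) ∈ s})]
  rfl

section Triangle

variable {u v : ℝ}

lemma finite_setOf_mul_add_mul_le (hu : 0 < u) (hv : 0 < v) (s : ℝ) :
    {p : ℕ × ℕ | u * p.1 + v * p.2 ≤ s}.Finite := by
  refine ((finite_Iic ⌊s / u⌋₊).prod (finite_Iic ⌊s / v⌋₊)).subset ?_
  rintro ⟨x, y⟩ (h : u * x + v * y ≤ s)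
  have hx : u * x ≤ s := by nlinarith [y.cast_nonneg (α := ℝ)]
  have hy : v * y ≤ s := by nlinarith [x.cast_nonneg (α := ℝ)]
  exact ⟨Nat.le_floor ((le_div_iff₀' hu).2 hx), Nat.le_floor ((le_div_iff₀' hv).2 hy)⟩

lemma ncard_setOf_mul_le (hv : 0 < v) {s : ℝ} (hs : 0 ≤ s) :
    {y : ℕ | v * y ≤ s}.ncard = ⌊s / v⌋₊ + 1 := by
  have : {y : ℕ | v * y ≤ s} = Iic ⌊s / v⌋₊ := by
    ext y
    rw [mem_ofPred_eq, mem_Iic, Nat.le_floor_iff (div_nonneg hs hv.le), le_div_iff₀' hv]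
  rw [this, ← Finset.coe_Iic, ncard_coe_finset, Nat.card_Iic]

lemma ncard_setOf_mul_succ_le (hu : 0 < u) (s : ℝ) :
    {x : ℕ | u * (x + 1) ≤ s}.ncard = ⌊s / u⌋₊ := by
  have : {x : ℕ | u * (x + 1) ≤ s} = Iio ⌊s / u⌋₊ := by
    ext x
    rw [mem_ofPred_eq, mem_Iio, Nat.lt_iff_add_one_le, Nat.le_floor_iff' x.succ_ne_zero,
      le_div_iff₀' hu, Nat.cast_succ]
  rw [this, ← Finset.coe_Iio, ncard_coe_finset, Nat.card_Iio]

lemma setOf_mul_add_mul_le_eq_empty (hu : 0 < u) (hv : 0 < v) {s : ℝ} (hs : s < 0) :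
    {p : ℕ × ℕ | u * p.1 + v * p.2 ≤ s} = ∅ := by
  refine eq_empty_of_forall_notMem fun p (hp : _ ≤ s) => ?_
  nlinarith [p.1.cast_nonneg (α := ℝ), p.2.cast_nonneg (α := ℝ)]

lemma ncard_setOf_mul_add_mul_le (hu : 0 < u) (hv : 0 < v) {s : ℝ} (hs : 0 ≤ s) :
    {p : ℕ × ℕ | u * p.1 + v * p.2 ≤ s}.ncard =
      ⌊s / u⌋₊ + ⌊s / v⌋₊ + 1 + {p : ℕ × ℕ | u * p.1 + v * p.2 ≤ s - (u + v)}.ncard := by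
  have hfin := finite_setOf_mul_add_mul_le hu hv s
  have hfin' : {p : ℕ × ℕ | (p.1 + 1, p.2) ∈ {p : ℕ × ℕ | u * p.1 + v * p.2 ≤ s}}.Finite :=
    hfin.preimage (Nat.succ_injective.prodMap Function.injective_id).injOn
  rw [ncard_eq_ncard_fst_zero_add_ncard_fst_succ hfin,
    ncard_eq_ncard_snd_zero_add_ncard_snd_succ hfin']
  simp only [mem_ofPred_eq, Nat.cast_zero, mul_zero, zero_add, add_zero, Nat.cast_succ]
  rw [ncard_setOf_mul_le hv hs, ncard_setOf_mul_succ_le hu]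
  have : {p : ℕ × ℕ | u * (p.1 + 1) + v * (p.2 + 1) ≤ s} =
      {p : ℕ × ℕ | u * p.1 + v * p.2 ≤ s - (u + v)} := by
    ext p
    simp only [mem_ofPred_eq]
    constructor <;> intro h <;> linarith
  rw [this]
  ring

end Triangle

lemma Irrational.natFloor_add_natFloor_add_one {x y : ℝ} {n : ℕ} (hx : Irrational x)
    (hx₀ : 0 ≤ x) (hy₀ : 0 ≤ y) (hxy : x + y = n) : ⌊x⌋₊ + ⌊y⌋₊ + 1 = n := by
  have hy : Irrational y := by
    rw [eq_sub_of_add_eq' hxy]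
    exact hx.natCast_sub n
  have hfx : (⌊x⌋₊ : ℝ) < x := (Nat.floor_le hx₀).lt_of_ne (hx.ne_nat _).symm
  have hfy : (⌊y⌋₊ : ℝ) < y := (Nat.floor_le hy₀).lt_of_ne (hy.ne_nat _).symm
  have hlt : ((⌊x⌋₊ + ⌊y⌋₊ : ℕ) : ℝ) < n := by push_cast; linarith
  have hgt : (n : ℝ) < ((⌊x⌋₊ + ⌊y⌋₊ + 2 : ℕ) : ℝ) := by
    push_cast; linarith [Nat.lt_floor_add_one x, Nat.lt_floor_add_one y]
  replace hlt := Nat.cast_lt.1 hlt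
  replace hgt := Nat.cast_lt.1 hgt
  omega

section Ehrhart

variable {u v : ℝ} {α : ℕ}

lemma ehrhart_of_lt (hu : 0 < u) (hv : 0 < v) (hsum : u + v = α) {t : ℕ} (ht : t < α) :
    ehrhart u v t = ⌊(t : ℝ) / u⌋₊ + ⌊(t : ℝ) / v⌋₊ + 1 := by
  have hneg : (t : ℝ) - (u + v) < 0 := by
    rw [hsum, sub_neg]
    exact_mod_cast ht
  rw [ehrhart, ncard_setOf_mul_add_mul_le hu hv t.cast_nonneg,
    setOf_mul_add_mul_le_eq_empty hu hv hneg, ncard_empty, add_zero]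

lemma ehrhart_add (hu : 0 < u) (hv : 0 < v) (hsum : u + v = α) (t : ℕ) :
    ehrhart u v (t + α) =
      ⌊((t + α : ℕ) : ℝ) / u⌋₊ + ⌊((t + α : ℕ) : ℝ) / v⌋₊ + 1 + ehrhart u v t := by
  rw [ehrhart, ncard_setOf_mul_add_mul_le hu hv (Nat.cast_nonneg _), hsum, Nat.cast_add,
    add_sub_cancel_right, ehrhart]

lemma natFloor_div_add_natFloor_div_add_one {β : ℕ} (hu : 0 < u) (hv : 0 < v)
    (hu_irr : Irrational u) (hinv : 1 / u + 1 / v = β) (n : ℕ) :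
    ⌊(n : ℝ) / u⌋₊ + ⌊(n : ℝ) / v⌋₊ + 1 = n * β + if n = 0 then 1 else 0 := by
  obtain rfl | hn := eq_or_ne n 0
  · simp
  rw [if_neg hn, add_zero]
  refine (hu_irr.natCast_div hn).natFloor_add_natFloor_add_one (by positivity) (by positivity) ?_
  rw [Nat.cast_mul, ← hinv]
  ring

end Ehrhart

noncomputable def ehrhartQuasiPolynomial (α β t : ℕ) : ℝ :=
  ((t : ℝ) ^ 2 * β + t * α * β + (t % α : ℕ) * β * (α - (t % α : ℕ))
    + 2 * α * (if (α : ℕ) ∣ t then 1 else 0)) / (2 * α)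

lemma ehrhartQuasiPolynomial_of_lt {α t : ℕ} (β : ℕ) (ht : t < α) :
    ehrhartQuasiPolynomial α β t = t * β + if t = 0 then 1 else 0 := by
  have hα : (α : ℝ) ≠ 0 := Nat.cast_ne_zero.2 (by omega)
  rw [ehrhartQuasiPolynomial, Nat.mod_eq_of_lt ht]
  have hdvd : α ∣ t ↔ t = 0 := ⟨fun h => Nat.eq_zero_of_dvd_of_lt h ht, by rintro rfl; simp⟩
  simp only [hdvd]
  split_ifs <;> field_simp <;> ring

lemma ehrhartQuasiPolynomial_add {α : ℕ} (β t : ℕ) (hα : 0 < α) :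
    ehrhartQuasiPolynomial α β (t + α) = ((t + α : ℕ) : ℝ) * β + ehrhartQuasiPolynomial α β t := by
  have hα' : (α : ℝ) ≠ 0 := by positivity
  simp only [ehrhartQuasiPolynomial, Nat.add_mod_right, Nat.dvd_add_self_right]
  field_simp
  push_cast
  ring

theorem stmt_0_general (u v : ℝ) (hu : 0 < u) (hv : 0 < v) (hirr : Irrational (u / v))
    (α β : ℕ) (hα : 0 < α)
    (hsum : u + v = α) (hinv : 1 / u + 1 / v = β) (t : ℕ) :
    (ehrhart u v t : ℝ) =
      ((t : ℝ) ^ 2 * β + t * α * β + (t % α : ℕ) * β * (α - (t % α : ℕ))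
        + 2 * α * (if (α : ℕ) ∣ t then 1 else 0)) / (2 * α) := by
  have hu_irr : Irrational u := hirr.div_cases.elim id fun hv_irr =>
    .of_natCast_sub α (eq_sub_of_add_eq' hsum ▸ hv_irr)
  have hboundary := natFloor_div_add_natFloor_div_add_one hu hv hu_irr hinv
  change (ehrhart u v t : ℝ) = ehrhartQuasiPolynomial α β t
  induction t using Nat.strong_induction_on with
  | _ t ih =>
  rcases lt_or_ge t α with ht | ht
  · rw [ehrhart_of_lt hu hv hsum ht, hboundary, ehrhartQuasiPolynomial_of_lt β ht]
    push_cast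
    rfl
  · obtain ⟨s, rfl⟩ := Nat.exists_eq_add_of_le' ht
    rw [ehrhart_add hu hv hsum, hboundary, if_neg (by omega), ehrhartQuasiPolynomial_add β s hα,
      ← ih s (by omega)]
    push_cast
    ring

theorem stmt_0 (u v : ℝ) (hu : 0 < u) (hv : 0 < v) (hirr : Irrational (u / v))
    (α β : ℕ) (hα : 0 < α) (hβ : 0 < β)
    (hsum : u + v = α) (hinv : 1 / u + 1 / v = β) (t : ℕ) (ht : 0 < t) :
    (ehrhart u v t : ℝ) =
      ((t : ℝ) ^ 2 * β + t * α * β + (t % α : ℕ) * β * (α - (t % α : ℕ))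
        + 2 * α * (if (α : ℕ) ∣ t then 1 else 0)) / (2 * α) :=
  stmt_0_general u v hu hv hirr α β hα hsum hinv t
end

section
/- Let τ = (1+√5)/2 be the golden ratio and set u = τ², v = 1/τ². Then for every positive integer t, the number I(t) of lattice points (x,y) ∈ ℤ_{≥0}² with ux + vy ≤ t equals (t²+3t+2)/2 = (t+1)(t+2)/2. -/
private lemma s5_sq : (Real.sqrt 5) ^ 2 = 5 := Real.sq_sqrt (by norm_num)

private lemma s5_gt : (11/5 : ℝ) < Real.sqrt 5 := by
  nlinarith [s5_sq, Real.sqrt_nonneg 5]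

private lemma s5_lt : Real.sqrt 5 < 9/4 := by
  nlinarith [s5_sq, Real.sqrt_nonneg 5]

private lemma s5_irr : Irrational (Real.sqrt 5) := by
  have := Nat.Prime.irrational_sqrt (p := 5) (by norm_num)
  simpa using this

private lemma finite_S (u v : ℝ) (hu : 0 < u) (hv : 0 < v) (w : ℝ) :
    {p : ℕ × ℕ | u * p.1 + v * p.2 ≤ w}.Finite := by
  apply Set.Finite.subset ((Set.finite_Iic (⌊w/u⌋₊)).prod (Set.finite_Iic (⌊w/v⌋₊)))
  rintro ⟨x, y⟩ h
  simp only [Set.mem_setOf_eq] at h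
  have hx : (x:ℝ) ≤ w / u := by
    rw [le_div_iff₀ hu]
    nlinarith [mul_nonneg hv.le (Nat.cast_nonneg y : (0:ℝ) ≤ y)]
  have hy : (y:ℝ) ≤ w / v := by
    rw [le_div_iff₀ hv]
    nlinarith [mul_nonneg hu.le (Nat.cast_nonneg x : (0:ℝ) ≤ x)]
  exact ⟨Nat.le_floor hx, Nat.le_floor hy⟩

private lemma key_rec (u v : ℝ) (hu : u = (3+Real.sqrt 5)/2) (hv : v = (3-Real.sqrt 5)/2)
    (t : ℕ) : ehrhart u v (t+3) = ehrhart u v t + (3*t+9) := by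
  have hupos : 0 < u := by rw [hu]; nlinarith [s5_lt, Real.sqrt_nonneg 5]
  have hvpos : 0 < v := by rw [hv]; nlinarith [s5_lt]
  have huv1 : u * v = 1 := by rw [hu, hv]; nlinarith [s5_sq]
  have huv3 : u + v = 3 := by rw [hu, hv]; ring
  set a := ⌊((t+3:ℕ):ℝ)*u⌋₊ with ha
  set b := ⌊((t+3:ℕ):ℝ)*v⌋₊ with hb
  have hX : (0:ℝ) ≤ ((t+3:ℕ):ℝ)*u := by positivity
  have hY : (0:ℝ) ≤ ((t+3:ℕ):ℝ)*v := by positivity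
  -- conversions
  have hconvQ : ∀ y : ℕ, v * y ≤ ((t+3:ℕ):ℝ) ↔ y ≤ a := by
    intro y
    rw [ha, Nat.le_floor_iff hX]
    constructor
    · intro h; nlinarith [Nat.cast_nonneg (α := ℝ) y]
    · intro h; nlinarith [Nat.cast_nonneg (α := ℝ) y]
  have hconvR : ∀ x : ℕ, u * x ≤ ((t+3:ℕ):ℝ) ↔ x ≤ b := by
    intro x
    rw [hb, Nat.le_floor_iff hY]
    constructor
    · intro h; nlinarith [Nat.cast_nonneg (α := ℝ) x]
    · intro h; nlinarith [Nat.cast_nonneg (α := ℝ) x]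
  -- a + b = 3t+8
  have hXirr : Irrational (((t+3:ℕ):ℝ) * u) := by
    rw [hu]
    have h1 : Irrational ((3+Real.sqrt 5)/2) := by
      have := (s5_irr.natCast_add 3).div_natCast (m := 2) (by norm_num)
      simpa using this
    have := h1.natCast_mul (m := t+3) (by omega)
    simpa using this
  have hYirr : Irrational (((t+3:ℕ):ℝ) * v) := by
    rw [hv]
    have h1 : Irrational ((3-Real.sqrt 5)/2) := by
      have := (s5_irr.neg.natCast_add 3).div_natCast (m := 2) (by norm_num)
      simpa [sub_eq_add_neg] using this
    have := h1.natCast_mul (m := t+3) (by omega)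
    simpa using this
  have hane : (a:ℝ) ≠ ((t+3:ℕ):ℝ) * u := by
    intro h; exact hXirr ⟨(a:ℚ), by rw [Rat.cast_natCast]; exact h⟩
  have hbne : (b:ℝ) ≠ ((t+3:ℕ):ℝ) * v := by
    intro h; exact hYirr ⟨(b:ℚ), by rw [Rat.cast_natCast]; exact h⟩
  have haX : (a:ℝ) < ((t+3:ℕ):ℝ) * u := lt_of_le_of_ne (Nat.floor_le hX) hane
  have hbY : (b:ℝ) < ((t+3:ℕ):ℝ) * v := lt_of_le_of_ne (Nat.floor_le hY) hbne
  have haX' : ((t+3:ℕ):ℝ) * u < a + 1 := Nat.lt_floor_add_one _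
  have hbY' : ((t+3:ℕ):ℝ) * v < b + 1 := Nat.lt_floor_add_one _
  have hab : a + b = 3*t + 8 := by
    have hsum : ((t+3:ℕ):ℝ) * u + ((t+3:ℕ):ℝ) * v = 3*t+9 := by
      push_cast; nlinarith
    have h1 : (a:ℝ) + b < 3*t + 9 := by linarith
    have h2 : (3*(t:ℝ) + 9) < (a:ℝ) + b + 2 := by linarith
    have h1' : a + b < 3*t + 9 := by exact_mod_cast h1
    have h2' : 3*t + 9 < a + b + 2 := by exact_mod_cast h2
    omega
  -- decomposition
  set P := (fun p : ℕ×ℕ => (p.1+1, p.2+1)) '' {p : ℕ×ℕ | u*p.1 + v*p.2 ≤ ((t:ℕ):ℝ)} with hP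
  set Q := (fun y : ℕ => ((0:ℕ), y)) '' Set.Iic a with hQ
  set R := (fun x : ℕ => (x, (0:ℕ))) '' Set.Icc 1 b with hR
  have hdecomp : {p : ℕ×ℕ | u*p.1 + v*p.2 ≤ ((t+3:ℕ):ℝ)} = P ∪ Q ∪ R := by
    ext ⟨x, y⟩
    simp only [hP, hQ, hR, Set.mem_union, Set.mem_image, Set.mem_setOf_eq, Set.mem_Iic,
      Set.mem_Icc, Prod.mk.injEq, Prod.exists]
    constructor
    · intro h
      match x, y with
      | 0, y =>
        left; right
        exact ⟨y, (hconvQ y).1 (by simpa using h), rfl, rfl⟩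
      | x+1, 0 =>
        right
        exact ⟨x+1, ⟨by omega, (hconvR (x+1)).1 (by simpa using h)⟩, rfl, rfl⟩
      | x+1, y+1 =>
        left; left
        refine ⟨x, y, ?_, rfl, rfl⟩
        have : u * ((x:ℝ)+1) + v * ((y:ℝ)+1) ≤ (t:ℝ) + 3 := by push_cast at h ⊢; linarith
        nlinarith
    · rintro ((⟨x', y', hm, rfl, rfl⟩ | ⟨y', hm, rfl, rfl⟩) | ⟨x', ⟨_, hm⟩, rfl, rfl⟩)
      · push_cast
        push_cast at hm
        nlinarith
      · have := (hconvQ y').2 hm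
        simpa using this
      · have := (hconvR x').2 hm
        simpa using this
  -- cardinalities
  have hfin : ∀ w : ℝ, {p : ℕ×ℕ | u*p.1 + v*p.2 ≤ w}.Finite := finite_S u v hupos hvpos
  have hPfin : P.Finite := ((hfin _).image _)
  have hQfin : Q.Finite := ((Set.finite_Iic a).image _)
  have hRfin : R.Finite := ((Set.finite_Icc 1 b).image _)
  have hPcard : P.ncard = ehrhart u v t := by
    rw [hP, Set.ncard_image_of_injective]
    · rfl
    · intro p q h
      simp only [Prod.mk.injEq] at h
      exact Prod.ext (by omega) (by omega)
  have hQcard : Q.ncard = a + 1 := by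
    rw [hQ, Set.ncard_image_of_injective _ (fun p q h => by simpa using h)]
    rw [← Finset.coe_Iic, Set.ncard_coe_finset, Nat.card_Iic]
  have hRcard : R.ncard = b := by
    rw [hR, Set.ncard_image_of_injective _ (fun p q h => by simpa using h)]
    rw [← Finset.coe_Icc, Set.ncard_coe_finset, Nat.card_Icc]
    omega
  have hdisj1 : Disjoint Q R := by
    rw [Set.disjoint_left]
    rintro ⟨x, y⟩ hq hr
    simp only [hQ, hR, Set.mem_image, Prod.mk.injEq, Set.mem_Icc] at hq hr
    obtain ⟨y', _, h1, _⟩ := hq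
    obtain ⟨x', ⟨hx1, _⟩, h3, _⟩ := hr
    omega
  have hdisj2 : Disjoint P (Q ∪ R) := by
    rw [Set.disjoint_left]
    rintro ⟨x, y⟩ hp hqr
    simp only [hP, Set.mem_image, Prod.mk.injEq, Prod.exists] at hp
    obtain ⟨x', y', _, h1, h2⟩ := hp
    rcases hqr with hq | hr
    · simp only [hQ, Set.mem_image, Prod.mk.injEq] at hq
      obtain ⟨_, _, h3, _⟩ := hq
      omega
    · simp only [hR, Set.mem_image, Prod.mk.injEq, Set.mem_Icc] at hr
      obtain ⟨_, _, _, h4⟩ := hr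
      omega
  have : ehrhart u v (t+3) = P.ncard + (Q.ncard + R.ncard) := by
    show _ = _
    unfold ehrhart
    rw [hdecomp, Set.union_assoc, Set.ncard_union_eq hdisj2 hPfin (hQfin.union hRfin),
      Set.ncard_union_eq hdisj1 hQfin hRfin]
  rw [this, hPcard, hQcard, hRcard]
  omega

private lemma base0 (u v : ℝ) (hu : u = (3+Real.sqrt 5)/2) (hv : v = (3-Real.sqrt 5)/2) :
    ehrhart u v 0 = 1 := by
  have hupos : 0 < u := by rw [hu]; nlinarith [s5_lt, Real.sqrt_nonneg 5]
  have hvpos : 0 < v := by rw [hv]; nlinarith [s5_lt]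
  have : {p : ℕ×ℕ | u*p.1 + v*p.2 ≤ ((0:ℕ):ℝ)} = {((0:ℕ),(0:ℕ))} := by
    ext ⟨x, y⟩
    simp only [Set.mem_setOf_eq, Set.mem_singleton_iff, Prod.mk.injEq]
    constructor
    · intro h
      simp only [Nat.cast_zero] at h
      have hx : (x:ℝ) = 0 := by
        nlinarith [Nat.cast_nonneg (α := ℝ) x, Nat.cast_nonneg (α := ℝ) y,
          mul_nonneg hupos.le (Nat.cast_nonneg (α := ℝ) x),
          mul_nonneg hvpos.le (Nat.cast_nonneg (α := ℝ) y)]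
      have hy : (y:ℝ) = 0 := by
        nlinarith [Nat.cast_nonneg (α := ℝ) x, Nat.cast_nonneg (α := ℝ) y,
          mul_nonneg hupos.le (Nat.cast_nonneg (α := ℝ) x),
          mul_nonneg hvpos.le (Nat.cast_nonneg (α := ℝ) y)]
      exact ⟨by exact_mod_cast hx, by exact_mod_cast hy⟩
    · rintro ⟨rfl, rfl⟩
      simp
  unfold ehrhart
  rw [this, Set.ncard_singleton]

private lemma base_small (u v : ℝ) (hu : u = (3+Real.sqrt 5)/2) (hv : v = (3-Real.sqrt 5)/2)
    (t a : ℕ) (hut : (t:ℝ) < u) (hva : v * a ≤ t) (hva' : (t:ℝ) < v * (a+1)) :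
    ehrhart u v t = a + 1 := by
  have hvpos : 0 < v := by rw [hv]; nlinarith [s5_lt]
  have : {p : ℕ×ℕ | u*p.1 + v*p.2 ≤ ((t:ℕ):ℝ)} = (fun y : ℕ => ((0:ℕ), y)) '' Set.Iic a := by
    ext ⟨x, y⟩
    simp only [Set.mem_setOf_eq, Set.mem_image, Set.mem_Iic, Prod.mk.injEq]
    constructor
    · intro h
      have hx0 : x = 0 := by
        by_contra hx
        have hx1 : (1:ℝ) ≤ (x:ℝ) := by exact_mod_cast Nat.one_le_iff_ne_zero.2 hx
        nlinarith [mul_nonneg hvpos.le (Nat.cast_nonneg (α := ℝ) y)]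
      subst hx0
      refine ⟨y, ?_, rfl, rfl⟩
      by_contra hy
      push_neg at hy
      have : ((a:ℝ)+1) ≤ (y:ℝ) := by exact_mod_cast hy
      simp only [Nat.cast_zero, mul_zero, zero_add] at h
      nlinarith
    · rintro ⟨y', hy', rfl, rfl⟩
      have : (y':ℝ) ≤ (a:ℝ) := by exact_mod_cast hy'
      simp only [Nat.cast_zero, mul_zero, zero_add]
      nlinarith
  unfold ehrhart
  rw [this, Set.ncard_image_of_injective _ (fun p q h => by simpa using h),
    ← Finset.coe_Iic, Set.ncard_coe_finset, Nat.card_Iic]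

private lemma main_lemma (u v : ℝ) (hu : u = (3+Real.sqrt 5)/2) (hv : v = (3-Real.sqrt 5)/2) :
    ∀ t : ℕ, 2 * ehrhart u v t = (t+1)*(t+2) := by
  intro t
  induction t using Nat.strong_induction_on with
  | _ t ih =>
    match t with
    | 0 => rw [base0 u v hu hv]
    | 1 =>
      rw [base_small u v hu hv 1 2]
      · rw [hu]; nlinarith [s5_gt]
      · rw [hv]; nlinarith [s5_gt]
      · rw [hv]; nlinarith [s5_lt]
    | 2 =>
      rw [base_small u v hu hv 2 5]
      · rw [hu]; nlinarith [s5_gt]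
      · rw [hv]; nlinarith [s5_gt]
      · rw [hv]; nlinarith [s5_lt]
    | (n+3) =>
      rw [key_rec u v hu hv n]
      have h := ih n (by omega)
      nlinarith [h]

/-- For the golden-ratio triangle `u = τ^2`, `v = 1/τ^2`, the Ehrhart function
is `(t+1)(t+2)/2`. -/
theorem stmt_2 (τ : ℝ) (hτ : τ = (1 + Real.sqrt 5) / 2) (t : ℕ) (ht : 0 < t) :
    2 * ehrhart (τ ^ 2) (1 / τ ^ 2) t = (t + 1) * (t + 2) := by
  have hu : τ ^ 2 = (3 + Real.sqrt 5) / 2 := by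
    rw [hτ]; linear_combination s5_sq / 4
  have hne : τ ^ 2 ≠ 0 := by
    rw [hu]; nlinarith [s5_lt, Real.sqrt_nonneg 5]
  have hv : 1 / τ ^ 2 = (3 - Real.sqrt 5) / 2 := by
    have h35 : (0:ℝ) < 3 + Real.sqrt 5 := by positivity
    rw [hu, one_div_div, div_eq_div_iff h35.ne' (by norm_num : (2:ℝ) ≠ 0)]
    linear_combination s5_sq
  exact main_lemma _ _ hu hv t
end

section
/- Let u, v be positive reals with u/v irrational, u+v = α and 1/u+1/v = β positive integers. If α = 1, or (α,β) ∈ {(3,3),(2,4)}, then the Ehrhart function of T_{u,v} is a polynomial in t, namely I(t) = (β/(2α))t² + (β/2)t + 1. -/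
theorem Set.ncard_eq_ncard_fst_eq_zero_add (S : Set (ℕ × ℕ)) (hS : S.Finite) :
    S.ncard = {n | (0, n) ∈ S}.ncard + {p : ℕ × ℕ | (p.1 + 1, p.2) ∈ S}.ncard := by
  rw [← Set.ncard_inter_add_ncard_sdiff_eq_ncard S {p | p.1 = 0} hS]
  congr 1
  · rw [← Set.ncard_preimage_of_injective_subset_range (Prod.mk_right_injective 0)]
    · congr 1; ext n; simp
    · rintro ⟨x, y⟩ ⟨-, rfl : x = 0⟩; exact ⟨y, rfl⟩
  · rw [← Set.ncard_preimage_of_injective_subset_range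
      (Nat.succ_injective.prodMap Function.injective_id)]
    · congr 1; ext ⟨x, y⟩; simp
    · rintro ⟨x, y⟩ ⟨-, hx : x ≠ 0⟩
      exact ⟨(x - 1, y), by simp [Nat.sub_add_cancel (Nat.one_le_iff_ne_zero.2 hx)]⟩

theorem Nat.floor_add_floor_add_one_of_irrational {x y : ℝ} {n : ℕ} (hx : 0 ≤ x) (hy : 0 ≤ y)
    (hirr : Irrational x) (h : x + y = n) : ⌊x⌋₊ + ⌊y⌋₊ + 1 = n := by
  have hlt : (⌊x⌋₊ : ℝ) < x := (Nat.floor_le hx).lt_of_ne fun h => hirr.ne_nat _ h.symm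
  have hlo : ((⌊x⌋₊ + ⌊y⌋₊ : ℕ) : ℝ) < n := by push_cast; linarith [Nat.floor_le hy]
  have hhi : (n : ℝ) < ((⌊x⌋₊ + ⌊y⌋₊ + 2 : ℕ) : ℝ) := by
    push_cast; linarith [Nat.lt_floor_add_one x, Nat.lt_floor_add_one y]
  have := Nat.cast_lt.mp hlo
  have := Nat.cast_lt.mp hhi
  omega

theorem ncard_setOf_mul_le_s5 {c r : ℝ} (hc : 0 < c) (hr : 0 ≤ r) :
    {n : ℕ | c * n ≤ r}.ncard = ⌊r / c⌋₊ + 1 := by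
  convert Set.ncard_coe_finset (Finset.range (⌊r / c⌋₊ + 1)) using 2
  · ext n
    simp [Nat.le_floor_iff (div_nonneg hr hc.le), le_div_iff₀ hc, mul_comm]
  · simp

theorem ncard_setOf_mul_le_sub {c r : ℝ} (hc : 0 < c) :
    {n : ℕ | c * n ≤ r - c}.ncard = ⌊r / c⌋₊ := by
  convert Set.ncard_coe_finset (Finset.range ⌊r / c⌋₊) using 2
  · ext n
    simp only [Set.mem_ofPred_eq, Finset.coe_range, Set.mem_Iio, ← Nat.add_one_le_iff,
      Nat.le_floor_iff' n.succ_ne_zero, le_div_iff₀ hc]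
    push_cast
    constructor <;> intro h <;> linarith
  · simp

/-- `ehrhart` at a real level, which may be negative. -/
noncomputable def latticeCount (u v r : ℝ) : ℕ := {p : ℕ × ℕ | u * p.1 + v * p.2 ≤ r}.ncard

section latticeCount

variable {u v : ℝ}

theorem latticeCount_comm (u v r : ℝ) : latticeCount u v r = latticeCount v u r := by
  rw [latticeCount, latticeCount, ← Set.ncard_image_of_injective _ Prod.swap_injective]
  congr 1
  ext ⟨x, y⟩
  simp [add_comm]

theorem latticeCount_of_neg (hu : 0 ≤ u) (hv : 0 ≤ v) {r : ℝ} (hr : r < 0) :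
    latticeCount u v r = 0 := by
  have hempty : {p : ℕ × ℕ | u * p.1 + v * p.2 ≤ r} = ∅ :=
    Set.eq_empty_of_forall_notMem fun p (hp : u * p.1 + v * p.2 ≤ r) =>
      hr.not_ge ((by positivity : (0 : ℝ) ≤ u * p.1 + v * p.2).trans hp)
  rw [latticeCount, hempty, Set.ncard_empty]

theorem finite_setOf_latticePoints (hu : 0 < u) (hv : 0 < v) (r : ℝ) :
    {p : ℕ × ℕ | u * p.1 + v * p.2 ≤ r}.Finite := by
  refine ((Set.finite_Iic ⌊r / u⌋₊).prod (Set.finite_Iic ⌊r / v⌋₊)).subset ?_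
  rintro ⟨x, y⟩ (h : u * x + v * y ≤ r)
  have hx : u * x ≤ r := by nlinarith [mul_nonneg hv.le y.cast_nonneg]
  have hy : v * y ≤ r := by nlinarith [mul_nonneg hu.le x.cast_nonneg]
  exact ⟨Nat.le_floor ((le_div_iff₀ hu).2 (by linarith)),
    Nat.le_floor ((le_div_iff₀ hv).2 (by linarith))⟩

theorem latticeCount_eq_ncard_add (hu : 0 < u) (hv : 0 < v) (r : ℝ) :
    latticeCount u v r = {n : ℕ | v * n ≤ r}.ncard + latticeCount u v (r - u) := by
  rw [latticeCount, Set.ncard_eq_ncard_fst_eq_zero_add _ (finite_setOf_latticePoints hu hv r)]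
  congr 2
  · ext n; simp
  · ext p
    simp only [Set.mem_ofPred_eq]
    push_cast
    constructor <;> intro h <;> linarith

theorem latticeCount_eq_floor_add (hu : 0 < u) (hv : 0 < v) {r : ℝ} (hr : 0 ≤ r) :
    latticeCount u v r = ⌊r / u⌋₊ + ⌊r / v⌋₊ + 1 + latticeCount u v (r - (u + v)) := by
  rw [latticeCount_eq_ncard_add hu hv, latticeCount_comm u v (r - u),
    latticeCount_eq_ncard_add hv hu, latticeCount_comm, ncard_setOf_mul_le_s5 hv hr,
    ncard_setOf_mul_le_sub hu, sub_sub]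
  ring

end latticeCount

section ehrhart

variable {u v : ℝ} {α β : ℕ}

theorem ehrhart_eq_latticeCount (u v : ℝ) (t : ℕ) : ehrhart u v t = latticeCount u v t := rfl

theorem ehrhart_zero (hu : 0 < u) (hv : 0 < v) : ehrhart u v 0 = 1 := by
  rw [ehrhart_eq_latticeCount, Nat.cast_zero, latticeCount_eq_floor_add hu hv le_rfl,
    latticeCount_of_neg hu.le hv.le (by linarith)]
  simp

theorem ehrhart_eq_mul_add (hu : 0 < u) (hv : 0 < v) (hiu : Irrational u)
    (hsum : u + v = α) (hinv : 1 / u + 1 / v = β) {t : ℕ} (ht : t ≠ 0) :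
    ehrhart u v t = β * t + latticeCount u v (t - α) := by
  have hfloor : ⌊(t : ℝ) / u⌋₊ + ⌊(t : ℝ) / v⌋₊ + 1 = β * t := by
    refine Nat.floor_add_floor_add_one_of_irrational (by positivity) (by positivity)
      (hiu.natCast_div ht) ?_
    rw [Nat.cast_mul, ← hinv]
    ring
  rw [ehrhart_eq_latticeCount, latticeCount_eq_floor_add hu hv t.cast_nonneg, hfloor, hsum]

theorem two_mul_ehrhart_eq (hu : 0 < u) (hv : 0 < v) (hiu : Irrational u)
    (hsum : u + v = α) (hinv : 1 / u + 1 / v = β)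
    (hbase : ∀ t : ℕ, 0 < t → t < α → 2 * α * (β * t) = β * t ^ 2 + α * β * t + 2 * α)
    (t : ℕ) : 2 * α * ehrhart u v t = β * t ^ 2 + α * β * t + 2 * α := by
  have hα : 0 < α := by exact_mod_cast hsum ▸ add_pos hu hv
  induction t using Nat.strong_induction_on with
  | _ t ih =>
    rcases Nat.eq_zero_or_pos t with rfl | ht0
    · simp [ehrhart_zero hu hv]
    rw [ehrhart_eq_mul_add hu hv hiu hsum hinv ht0.ne']
    rcases lt_or_ge t α with htα | htα
    · rw [latticeCount_of_neg hu.le hv.le (by simpa using htα), add_zero]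
      exact hbase t ht0 htα
    · obtain ⟨s, rfl⟩ := Nat.exists_eq_add_of_le' htα
      have hs := ih s (by omega)
      rw [Nat.cast_add, add_sub_cancel_right, ← ehrhart_eq_latticeCount]
      linear_combination hs

end ehrhart

theorem stmt_5_general (u v : ℝ) (hu : 0 < u) (hv : 0 < v) (hirr : Irrational (u / v))
    (α β : ℕ)
    (hsum : u + v = α) (hinv : 1 / u + 1 / v = β)
    (hcase : α = 1 ∨ (α = 3 ∧ β = 3) ∨ (α = 2 ∧ β = 4)) :
    ∀ t : ℕ, 0 < t →
      2 * α * ehrhart u v t = β * t ^ 2 + α * β * t + 2 * α := by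
  have hiu : Irrational u := by
    rcases hirr.div_cases with h | h
    · exact h
    · simpa [← hsum] using h.natCast_sub α
  have hbase : ∀ t : ℕ, 0 < t → t < α → 2 * α * (β * t) = β * t ^ 2 + α * β * t + 2 * α := by
    rcases hcase with rfl | ⟨rfl, rfl⟩ | ⟨rfl, rfl⟩ <;> intro t ht0 htα <;> interval_cases t <;> rfl
  exact fun t _ => two_mul_ehrhart_eq hu hv hiu hsum hinv hbase t

/-- If `α = 1` or `(α,β) ∈ {(3,3),(2,4)}`, the admissible irrational triangle
is pseudo-integral with Ehrhart polynomial `(β/(2α))t² + (β/2)t + 1`. -/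
theorem stmt_5 (u v : ℝ) (hu : 0 < u) (hv : 0 < v) (hirr : Irrational (u / v))
    (α β : ℕ) (hα : 0 < α) (hβ : 0 < β)
    (hsum : u + v = α) (hinv : 1 / u + 1 / v = β)
    (hcase : α = 1 ∨ (α = 3 ∧ β = 3) ∨ (α = 2 ∧ β = 4)) :
    ∀ t : ℕ, 0 < t →
      2 * α * ehrhart u v t = β * t ^ 2 + α * β * t + 2 * α :=
  stmt_5_general u v hu hv hirr α β hsum hinv hcase
end

section
/- For any integer p > 1, the triangle with vertices (0,0), (p,0) and (0,(p−1)/p) is pseudo-integral: its Ehrhart function #{(x,y)∈ℤ_{≥0}² : (1/p)x + (p/(p−1))y ≤ t} is a polynomial in t, even though the denominator of the triangle is p. -/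
/-!
Write `p = c + 1`. Clearing denominators, `(x, y)` is counted at `t` iff
`c x + p² y ≤ p (c t)`. Splitting `x = p m + j` with `j ≤ c`, this is equivalent to
`c m + (p y + j) ≤ c t`, since `p A + c j ≤ p B ↔ A + j ≤ B` for `j ≤ c`. As
`(x, y) ↦ (m, p y + j)` is a bijection of `ℕ × ℕ`, the Ehrhart function agrees with that of the
lattice triangle `c m + w ≤ c t`, which is `(t + 1) (c t + 2) / 2`.
-/

open Finset Polynomial

def remainderTransferEquiv (n : ℕ) [NeZero n] : ℕ × ℕ ≃ ℕ × ℕ where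
  toFun q := (q.1 / n, n * q.2 + q.1 % n)
  invFun q := (n * q.1 + q.2 % n, q.2 / n)
  left_inv := fun ⟨x, y⟩ => by
    simp [Nat.mul_add_div (NeZero.pos n), Nat.div_add_mod]
  right_inv := fun ⟨m, w⟩ => by
    simp [Nat.mul_add_div (NeZero.pos n), Nat.div_add_mod]

theorem succ_mul_add_mul_le_succ_mul_iff {c A B j : ℕ} (hj : j ≤ c) :
    (c + 1) * A + c * j ≤ (c + 1) * B ↔ A + j ≤ B := by
  constructor
  · intro h
    have : (c + 1) * (A + j) < (c + 1) * (B + 1) := by nlinarith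
    exact Nat.lt_succ_iff.mp (Nat.lt_of_mul_lt_mul_left this)
  · intro h
    nlinarith [Nat.mul_le_mul_left (c + 1) h]

theorem remainderTransferEquiv_preimage (c n : ℕ) :
    remainderTransferEquiv (c + 1) ⁻¹' {q | c * q.1 + q.2 ≤ n} =
      {q | c * q.1 + (c + 1) ^ 2 * q.2 ≤ (c + 1) * n} := by
  ext ⟨x, y⟩
  have hx : (c + 1) * (x / (c + 1)) + x % (c + 1) = x := Nat.div_add_mod x (c + 1)
  have hr : x % (c + 1) ≤ c := Nat.lt_succ_iff.mp (Nat.mod_lt x c.succ_pos)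
  have hscale : (c + 1) * (c * (x / (c + 1)) + (c + 1) * y) + c * (x % (c + 1)) =
      c * x + (c + 1) ^ 2 * y := by
    conv_rhs => rw [← hx]
    ring
  simp only [Set.mem_preimage, Set.mem_ofPred_eq, remainderTransferEquiv, Equiv.coe_fn_mk]
  rw [← add_assoc, ← succ_mul_add_mul_le_succ_mul_iff hr, hscale]

theorem two_mul_sum_range_mul_add_one (c n : ℕ) :
    2 * ∑ k ∈ range (n + 1), (c * k + 1) = (n + 1) * (c * n + 2) := by
  induction n with
  | zero => simp
  | succ n ih =>
    rw [sum_range_succ, Nat.mul_add, ih]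
    ring

theorem two_mul_ncard_setOf_mul_add_le {c : ℕ} (hc : 0 < c) (t : ℕ) :
    2 * {q : ℕ × ℕ | c * q.1 + q.2 ≤ c * t}.ncard = (t + 1) * (c * t + 2) := by
  have hS : {q : ℕ × ℕ | c * q.1 + q.2 ≤ c * t} =
      ↑{q ∈ range (t + 1) ×ˢ range (c * t + 1) | c * q.1 + q.2 ≤ c * t} := by
    ext ⟨m, w⟩
    simp only [Set.mem_ofPred_eq, coe_filter, mem_product, mem_range]
    refine ⟨fun h => ⟨⟨?_, by omega⟩, h⟩, fun h => h.2⟩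
    exact Nat.lt_succ_of_le (Nat.le_of_mul_le_mul_left (by omega) hc)
  have hfiber : ∀ m ∈ range (t + 1),
      #{w ∈ range (c * t + 1) | c * m + w ≤ c * t} = c * (t - m) + 1 := by
    intro m hm
    have : c * m ≤ c * t := Nat.mul_le_mul_left c (by simpa [Nat.lt_succ_iff] using hm)
    rw [Nat.mul_sub, ← card_range (c * t - c * m + 1)]
    congr 1
    ext w
    simp only [mem_filter, mem_range]
    omega
  rw [hS, Set.ncard_coe_finset, card_filter, sum_product]
  simp only [← card_filter]
  rw [sum_congr rfl hfiber, ← two_mul_sum_range_mul_add_one]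
  simpa using sum_range_reflect (fun k => c * k + 1) (t + 1)

theorem ehrhart_eq_ncard {c : ℕ} (hc : 0 < c) (t : ℕ) :
    ehrhart (1 / ((c + 1 : ℕ) : ℝ)) (((c + 1 : ℕ) : ℝ) / ((c + 1 : ℕ) - 1)) t =
      {q : ℕ × ℕ | c * q.1 + (c + 1) ^ 2 * q.2 ≤ (c + 1) * (c * t)}.ncard := by
  unfold ehrhart
  congr 1
  ext q
  have hpos : (0 : ℝ) < (c + 1) * c := by positivity
  have hscale : ((c : ℝ) + 1) * c * (1 / ((c : ℝ) + 1) * q.1 + ((c : ℝ) + 1) / c * q.2) =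
      c * q.1 + (c + 1) ^ 2 * q.2 := by
    field_simp
  simp only [Set.mem_ofPred_eq]
  rw [← Nat.cast_le (α := ℝ)]
  push_cast
  rw [add_sub_cancel_right, ← mul_le_mul_iff_of_pos_left hpos, hscale, mul_assoc]

/-- The triangle with vertices `(0,0), (p,0), (0,(p−1)/p)` is pseudo-integral. -/
theorem stmt_13 (p : ℕ) (hp : 1 < p) :
    ∃ P : Polynomial ℚ, ∀ t : ℕ, 0 < t →
      (ehrhart (1 / (p : ℝ)) ((p : ℝ) / (p - 1)) t : ℚ) = P.eval (t : ℚ) := by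
  obtain ⟨c, rfl⟩ : ∃ c, p = c + 1 := ⟨p - 1, by omega⟩
  have hc : 0 < c := by omega
  refine ⟨C (1 / 2) * ((X + 1) * (C (c : ℚ) * X + 2)), fun t _ => ?_⟩
  have hcount : 2 * ehrhart (1 / ((c + 1 : ℕ) : ℝ)) (((c + 1 : ℕ) : ℝ) / ((c + 1 : ℕ) - 1)) t =
      (t + 1) * (c * t + 2) := by
    rw [ehrhart_eq_ncard hc, ← remainderTransferEquiv_preimage,
      Set.ncard_preimage_of_injective_subset_range (Equiv.injective _) (by simp),
      two_mul_ncard_setOf_mul_add_le hc]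
  generalize ehrhart _ _ t = E at hcount ⊢
  have hcountℚ : (2 : ℚ) * E = (t + 1) * (c * t + 2) := by exact_mod_cast hcount
  simp only [eval_mul, eval_add, eval_C, eval_X, eval_one, eval_ofNat]
  linarith
end

section
/- Let p, q be relatively prime positive integers such that p | (q²+1) and gcd((q²+1)/p, p) = 1. Then q is a period of the Ehrhart quasipolynomial of the triangle with vertices (0,0), (p/q,0), (0,q/p). -/
open Finset

theorem ncard_setOf_mul_add_mul_le_s14 {a b : ℕ} (ha : 0 < a) (hb : 0 < b) (N : ℕ) :
    {z : ℕ × ℕ | a * z.1 + b * z.2 ≤ N}.ncard =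
      ∑ x ∈ range (N / a + 1), ((N - a * x) / b + 1) := by
  have hS : {z : ℕ × ℕ | a * z.1 + b * z.2 ≤ N} =
      ↑({z ∈ range (N / a + 1) ×ˢ range (N / b + 1) | a * z.1 + b * z.2 ≤ N}) := by
    ext ⟨x, y⟩
    simp only [Set.mem_ofPred_eq, coe_filter, mem_product, mem_range, Nat.lt_succ_iff,
      Nat.le_div_iff_mul_le ha, Nat.le_div_iff_mul_le hb]
    exact ⟨fun h => ⟨⟨by nlinarith, by nlinarith⟩, h⟩, fun h => h.2⟩
  rw [hS, Set.ncard_coe_finset, card_filter, sum_product]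
  refine sum_congr rfl fun x hx => ?_
  have hax : a * x ≤ N := by
    rw [mem_range, Nat.lt_succ_iff, Nat.le_div_iff_mul_le ha] at hx
    linarith
  rw [← card_filter, ← card_range ((N - a * x) / b + 1)]
  congr 1
  ext y
  simp only [mem_filter, mem_range, Nat.lt_succ_iff, Nat.le_div_iff_mul_le hb, mul_comm y b]
  exact ⟨fun h => by omega, fun h => ⟨by omega, by omega⟩⟩

theorem ncard_setOf_mul_add_mul_le_add_mul {a b : ℕ} (ha : 0 < a) (hb : 0 < b) (N k : ℕ) :
    {z : ℕ × ℕ | a * z.1 + b * z.2 ≤ N + a * k}.ncard =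
      ∑ x ∈ range k, ((N + a * k - a * x) / b + 1) +
        {z : ℕ × ℕ | a * z.1 + b * z.2 ≤ N}.ncard := by
  rw [ncard_setOf_mul_add_mul_le_s14 ha hb, ncard_setOf_mul_add_mul_le_s14 ha hb,
    Nat.add_mul_div_left _ _ ha, show N / a + k + 1 = k + (N / a + 1) by ring, sum_range_add]
  congr 2 with x
  rw [mul_add, add_comm (a * k) (a * x), Nat.add_sub_add_right]

theorem ehrhart_div_div {p q : ℕ} (hp : 0 < p) (hq : 0 < q) (t : ℕ) :
    ehrhart ((q : ℝ) / p) ((p : ℝ) / q) t =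
      {z : ℕ × ℕ | q ^ 2 * z.1 + p ^ 2 * z.2 ≤ p * q * t}.ncard := by
  unfold ehrhart
  congr with z
  rw [← Nat.cast_le (α := ℝ), ← mul_le_mul_iff_of_pos_left (by positivity : (0 : ℝ) < p * q)]
  push_cast
  field_simp

theorem Int.add_mul_ediv_mul_self {x p : ℤ} (hx : 0 ≤ x) (hxp : x < p) (y : ℤ) :
    (x + p * y) / (p * p) = y / p := by
  rw [← Int.ediv_ediv_of_nonneg (by omega), Int.add_mul_ediv_left _ _ (by omega),
    Int.ediv_eq_zero_of_lt hx hxp, zero_add]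

theorem sum_range_add_mul_emod {p : ℕ} {k : ℤ} (hk : IsCoprime k p) (c : ℤ) :
    ∑ x ∈ range p, (c + k * x) % p = ∑ x ∈ range p, (x : ℤ) := by
  rcases Nat.eq_zero_or_pos p with rfl | hp
  · simp
  have hnonneg (x : ℕ) : 0 ≤ (c + k * x) % p := Int.emod_nonneg _ (by positivity)
  set i : ℕ → ℕ := fun x => ((c + k * x) % p).toNat
  have hmaps : Set.MapsTo i (range p) (range p) := fun x _ => by
    have := Int.emod_lt_of_pos (c + k * x) (by positivity : (0 : ℤ) < p)
    simp only [coe_range, Set.mem_Iio, i]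
    omega
  have hinj : Set.InjOn i (range p) := fun x hx y hy hxy => by
    simp only [coe_range, Set.mem_Iio] at hx hy
    have hmod : c + k * x ≡ c + k * y [ZMOD p] := by
      rw [Int.ModEq, ← Int.toNat_of_nonneg (hnonneg x), ← Int.toNat_of_nonneg (hnonneg y)]
      exact congrArg _ hxy
    have hdvd : (p : ℤ) ∣ y - x := hk.symm.dvd_of_dvd_mul_left <| by
      simpa [mul_sub] using hmod.dvd
    have := Int.eq_zero_of_abs_lt_dvd hdvd (by rw [abs_lt]; omega)
    omega
  exact sum_nbij i hmaps hinj (surjOn_of_injOn_of_card_le i hmaps hinj le_rfl)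
    fun x _ => (Int.toNat_of_nonneg (hnonneg x)).symm

theorem mul_sum_range_add_mul_ediv {p : ℕ} {k : ℤ} (hk : IsCoprime k p) (c : ℤ) :
    p * ∑ x ∈ range p, (c + k * x) / p = p * c + (k - 1) * ∑ x ∈ range p, (x : ℤ) := by
  rw [mul_sum,
    sum_congr rfl fun (x : ℕ) _ => eq_sub_of_add_eq (Int.mul_ediv_add_emod (c + k * x) p),
    sum_sub_distrib, sum_range_add_mul_emod hk, sum_add_distrib, sum_const, card_range,
    nsmul_eq_mul, ← mul_sum]
  ring

theorem mul_sum_strip {p q m : ℕ} (hpm : p * m = q ^ 2 + 1) (hm : Nat.Coprime m p) (t : ℕ) :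
    (p : ℤ) * ((∑ x ∈ range p, ((p * q * t + q ^ 2 * p - q ^ 2 * x) / p ^ 2 + 1) : ℕ) : ℤ) =
      p * q * (t + q) - (m + 1) * ∑ x ∈ range p, (x : ℤ) + p ^ 2 := by
  have hterm : ∀ x ∈ range p, (((p * q * t + q ^ 2 * p - q ^ 2 * x) / p ^ 2 + 1 : ℕ) : ℤ) =
      (((t : ℤ) + q) * q + -(m : ℤ) * x) / p + 1 := by
    intro x hx
    rw [mem_range] at hx
    have hle : q ^ 2 * x ≤ p * q * t + q ^ 2 * p :=
      (Nat.mul_le_mul_left _ hx.le).trans (Nat.le_add_left _ _)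
    have hpm' : (p : ℤ) * m = q ^ 2 + 1 := by exact_mod_cast hpm
    push_cast [hle]
    rw [show (p * q * t + q ^ 2 * p - q ^ 2 * x : ℤ) = x + p * ((t + q) * q + -(m : ℤ) * x) by
        linear_combination (x : ℤ) * hpm',
      sq, Int.add_mul_ediv_mul_self (by positivity) (by exact_mod_cast hx)]
  have hk : IsCoprime (-(m : ℤ)) p := (Nat.isCoprime_iff_coprime.2 hm).neg_left
  rw [Nat.cast_sum, sum_congr rfl hterm, sum_add_distrib, mul_add,
    mul_sum_range_add_mul_ediv hk, sum_const, card_range, nsmul_eq_mul]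
  ring

theorem sum_strip_eq {p q m : ℕ} (hpm : p * m = q ^ 2 + 1) (hm : Nat.Coprime m p) (t : ℕ) :
    ∑ x ∈ range p, ((p * q * t + q ^ 2 * p - q ^ 2 * x) / p ^ 2 + 1) =
      q * t + ∑ x ∈ range p, ((q ^ 2 * p - q ^ 2 * x) / p ^ 2 + 1) := by
  have hp : (p : ℤ) ≠ 0 := Nat.cast_ne_zero.2 (by rintro rfl; simp at hpm)
  have h0 := mul_sum_strip hpm hm 0
  simp only [mul_zero, zero_add, Nat.cast_zero] at h0
  refine Nat.cast_injective (R := ℤ) (mul_left_cancel₀ hp ?_)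
  rw [mul_sum_strip hpm hm, Nat.cast_add, Nat.cast_mul]
  linear_combination -h0

theorem exists_quadratic_add_periodic_of_forall_add_eq {K : Type*} [Field K] [CharZero K]
    {q : ℕ} (hq : q ≠ 0) {f : ℕ → K} {α β : K} (hf : ∀ t, f (t + q) = f t + α * t + β) :
    ∃ A B : K, ∃ c : ℕ → K, Function.Periodic c q ∧ ∀ t, f t = A * t ^ 2 + B * t + c t := by
  have hq' : (q : K) ≠ 0 := Nat.cast_ne_zero.2 hq
  refine ⟨α / (2 * q), β / q - α / 2, fun t => f t - α / (2 * q) * t ^ 2 - (β / q - α / 2) * t,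
    fun t => ?_, fun t => by ring⟩
  simp only [hf, Nat.cast_add]
  field_simp
  ring

theorem stmt_14_general (p q : ℕ) (hp : 0 < p) (hq : 0 < q)
    (h1 : p ∣ (q ^ 2 + 1)) (h2 : Nat.gcd ((q ^ 2 + 1) / p) p = 1) :
    ∃ A B : ℚ, ∃ c : ℕ → ℚ, (∀ t : ℕ, c (t + q) = c t) ∧
      ∀ t : ℕ, 0 < t →
        (ehrhart ((q : ℝ) / p) ((p : ℝ) / q) t : ℚ) = A * t ^ 2 + B * t + c t := by
  obtain ⟨m, hm⟩ := h1
  rw [hm, Nat.mul_div_cancel_left m hp] at h2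
  have hshift (t : ℕ) : (ehrhart ((q : ℝ) / p) ((p : ℝ) / q) (t + q) : ℚ) =
      ehrhart ((q : ℝ) / p) ((p : ℝ) / q) t + q * t +
        (∑ x ∈ range p, ((q ^ 2 * p - q ^ 2 * x) / p ^ 2 + 1) : ℕ) := by
    rw [ehrhart_div_div hp hq, ehrhart_div_div hp hq, show p * q * (t + q) = p * q * t + q ^ 2 * p
      by ring, ncard_setOf_mul_add_mul_le_add_mul (by positivity) (by positivity),
      sum_strip_eq hm.symm h2]
    push_cast
    ring
  obtain ⟨A, B, c, hc, hf⟩ := exists_quadratic_add_periodic_of_forall_add_eq hq.ne'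
    (f := fun t => (ehrhart ((q : ℝ) / p) ((p : ℝ) / q) t : ℚ)) hshift
  exact ⟨A, B, c, hc, fun t _ => hf t⟩

/-- If `p ∣ q²+1` and `gcd((q²+1)/p, p) = 1` then `q` is a period of the
Ehrhart quasipolynomial of the triangle with vertices `(0,0),(p/q,0),(0,q/p)`. -/
theorem stmt_14 (p q : ℕ) (hp : 0 < p) (hq : 0 < q) (hpq : Nat.gcd p q = 1)
    (h1 : p ∣ (q ^ 2 + 1)) (h2 : Nat.gcd ((q ^ 2 + 1) / p) p = 1) :
    ∃ A B : ℚ, ∃ c : ℕ → ℚ, (∀ t : ℕ, c (t + q) = c t) ∧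
      ∀ t : ℕ, 0 < t →
        (ehrhart ((q : ℝ) / p) ((p : ℝ) / q) t : ℚ) = A * t ^ 2 + B * t + c t :=
  stmt_14_general p q hp hq h1 h2
end

section
/- Fix k ≥ 1 and let F_n denote the k-Fibonacci numbers (F_0=0, F_1=1, F_n = kF_{n−1}+F_{n−2}). For even n ≥ 2, setting (p,q) = (F_{n−1}, F_n), we have gcd(p,q) = 1, p | (q²+1), and gcd((q²+1)/p, p) = 1; the same holds for (p,q) = (F_{n+1}, F_n). -/
/-!
Cassini's identity `F (m+1)² - F m · F (m+2) = (-1)^m` gives, for odd `m`,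
`F m · F (m+2) = F (m+1)² + 1`. So, writing `n = m + 1` and `q = F n`, the cofactor `(q² + 1) / p`
is `F (m+2)` for `p = F m` and `F m` for `p = F (m+2)`; everything reduces to `F m` and `F (m+2)`
being coprime. Since `F (m+2) = k · F (m+1) + F m`, this amounts to `F m` being coprime to
`F (m+1)`, which holds for all consecutive terms, and to `k`, which holds because odd-indexed terms
are `≡ F 1 = 1 (mod k)`.
-/

def PeriodCollapse (p q : ℕ) : Prop :=
  Nat.gcd p q = 1 ∧ p ∣ q ^ 2 + 1 ∧ Nat.gcd ((q ^ 2 + 1) / p) p = 1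

theorem periodCollapse_of_mul_eq {p q r : ℕ} (h : p * r = q ^ 2 + 1) (hpq : p.Coprime q)
    (hrp : r.Coprime p) : PeriodCollapse p q := by
  have hp : p ≠ 0 := by rintro rfl; omega
  refine ⟨hpq, ⟨r, h.symm⟩, ?_⟩
  rwa [← h, Nat.mul_div_cancel_left r (Nat.pos_of_ne_zero hp)]

namespace KFibonacci

variable {k : ℕ} {F : ℕ → ℕ}

theorem coprime_succ (h0 : F 0 = 0) (h1 : F 1 = 1)
    (hrec : ∀ n, F (n + 2) = k * F (n + 1) + F n) (m : ℕ) : (F m).Coprime (F (m + 1)) := by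
  induction m with
  | zero => simp [h0, h1]
  | succ m ih =>
    rw [hrec, Nat.coprime_mul_right_add_right]
    exact ih.symm

theorem add_two_modEq (hrec : ∀ n, F (n + 2) = k * F (n + 1) + F n) (m : ℕ) :
    F (m + 2) ≡ F m [MOD k] := by
  rw [hrec, Nat.ModEq, Nat.mul_add_mod]

theorem modEq_one_of_odd (h1 : F 1 = 1) (hrec : ∀ n, F (n + 2) = k * F (n + 1) + F n)
    {m : ℕ} (hm : Odd m) : F m ≡ 1 [MOD k] := by
  obtain ⟨j, rfl⟩ := hm
  induction j with
  | zero => simp [h1, Nat.ModEq.refl]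
  | succ j ih => exact (add_two_modEq hrec (2 * j + 1)).trans ih

theorem coprime_of_odd (h1 : F 1 = 1) (hrec : ∀ n, F (n + 2) = k * F (n + 1) + F n)
    {m : ℕ} (hm : Odd m) : (F m).Coprime k := by
  rw [Nat.Coprime, (modEq_one_of_odd h1 hrec hm).gcd_eq, Nat.gcd_one_left]

theorem cassini (h0 : F 0 = 0) (h1 : F 1 = 1) (hrec : ∀ n, F (n + 2) = k * F (n + 1) + F n)
    (m : ℕ) : (F (m + 1) : ℤ) ^ 2 - F m * F (m + 2) = (-1) ^ m := by
  induction m with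
  | zero => simp [h0, h1]
  | succ m ih =>
    have h2 : (F (m + 2) : ℤ) = k * F (m + 1) + F m := mod_cast hrec m
    have h3 : (F (m + 3) : ℤ) = k * F (m + 2) + F (m + 1) := mod_cast hrec (m + 1)
    rw [pow_succ]
    linear_combination (F (m + 2) : ℤ) * h2 - (F (m + 1) : ℤ) * h3 - ih

theorem mul_add_two_of_odd (h0 : F 0 = 0) (h1 : F 1 = 1)
    (hrec : ∀ n, F (n + 2) = k * F (n + 1) + F n) {m : ℕ} (hm : Odd m) :
    F m * F (m + 2) = F (m + 1) ^ 2 + 1 := by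
  have h := cassini h0 h1 hrec m
  rw [hm.neg_one_pow] at h
  exact_mod_cast (by linarith : (F m * F (m + 2) : ℤ) = F (m + 1) ^ 2 + 1)

theorem add_two_coprime_of_odd (h0 : F 0 = 0) (h1 : F 1 = 1)
    (hrec : ∀ n, F (n + 2) = k * F (n + 1) + F n) {m : ℕ} (hm : Odd m) :
    (F (m + 2)).Coprime (F m) := by
  rw [hrec, Nat.coprime_add_self_left]
  exact Nat.Coprime.mul_left (coprime_of_odd h1 hrec hm).symm (coprime_succ h0 h1 hrec m).symm

end KFibonacci

open KFibonacci in
theorem stmt_17_general (k : ℕ) (F : ℕ → ℕ)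
    (h0 : F 0 = 0) (h1 : F 1 = 1)
    (hrec : ∀ n, F (n + 2) = k * F (n + 1) + F n)
    (n : ℕ) (hn : 2 ≤ n) (hev : Even n) :
    (Nat.gcd (F (n - 1)) (F n) = 1 ∧ F (n - 1) ∣ (F n ^ 2 + 1) ∧
      Nat.gcd ((F n ^ 2 + 1) / F (n - 1)) (F (n - 1)) = 1) ∧
    (Nat.gcd (F (n + 1)) (F n) = 1 ∧ F (n + 1) ∣ (F n ^ 2 + 1) ∧
      Nat.gcd ((F n ^ 2 + 1) / F (n + 1)) (F (n + 1)) = 1) := by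
  obtain ⟨m, rfl⟩ : ∃ m, n = m + 1 := ⟨n - 1, by omega⟩
  have hm : Odd m := Nat.not_even_iff_odd.mp (Nat.even_add_one.mp hev)
  have hmul := mul_add_two_of_odd h0 h1 hrec hm
  have hcop := add_two_coprime_of_odd h0 h1 hrec hm
  rw [Nat.add_sub_cancel]
  exact ⟨periodCollapse_of_mul_eq hmul (coprime_succ h0 h1 hrec m) hcop,
    periodCollapse_of_mul_eq (by rw [mul_comm, hmul]) (coprime_succ h0 h1 hrec (m + 1)).symm
      hcop.symm⟩

/-- For even `n ≥ 2`, consecutive `k`-Fibonacci numbers satisfy the period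
collapse criterion. -/
theorem stmt_17 (k : ℕ) (hk : 1 ≤ k) (F : ℕ → ℕ)
    (h0 : F 0 = 0) (h1 : F 1 = 1)
    (hrec : ∀ n, F (n + 2) = k * F (n + 1) + F n)
    (n : ℕ) (hn : 2 ≤ n) (hev : Even n) :
    (Nat.gcd (F (n - 1)) (F n) = 1 ∧ F (n - 1) ∣ (F n ^ 2 + 1) ∧
      Nat.gcd ((F n ^ 2 + 1) / F (n - 1)) (F (n - 1)) = 1) ∧
    (Nat.gcd (F (n + 1)) (F n) = 1 ∧ F (n + 1) ∣ (F n ^ 2 + 1) ∧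
      Nat.gcd ((F n ^ 2 + 1) / F (n + 1)) (F (n + 1)) = 1) :=
  stmt_17_general k F h0 h1 hrec n hn hev
end

section
/- The Ehrhart function of the irrational tetrahedron T with vertices (0,0,0), (1/2,0,0), (0, 2+√2, 0), (0,0, 2−√2) is the polynomial f(t) = t³/6 + t² + 11t/6 + 1: that is, for every positive integer t, #{(x,y,z) ∈ ℤ_{≥0}³ : 2x + (1 − √2/2)y + (1 + √2/2)z ≤ t} = t³/6 + t² + 11t/6 + 1. -/
/-!
Write `y = u + w⁻`, `z = u + w⁺` with `u = min y z` and `w = z - y ∈ ℤ`. Since the coefficients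
of `y` and `z` add up to `2`, the defining inequality becomes
`2x + 2u + (|w| + w√2/2) ≤ t`. Splitting off a coordinate with coefficient `2` according to
whether it vanishes gives the recurrence `N(m) = N'(m) + N(m - 2)` between sublevel counts.
The integers `w` with `|w| + w√2/2 ≤ m` form the interval `[-⌊m(2+√2)⌋, ⌊m(2-√2)⌋]`; as
`m(2±√2)` are irrational with sum `4m`, it has `4m` points for `m ≥ 1`. The recurrence then
gives `(m+1)²` points for the triangle in `(y, z)` and `(t+1)(t+2)(t+3)/6` for the tetrahedron.
-/

noncomputable def ehrhart3 (a b c : ℝ) (t : ℕ) : ℕ :=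
  {p : ℕ × ℕ × ℕ | a * p.1 + b * p.2.1 + c * p.2.2 ≤ t}.ncard

open Set

section Lift

variable {α : Type*}

theorem setOf_two_mul_add_le_eq_union (f : α → ℝ) (m : ℝ) :
    {p : ℕ × α | 2 * (p.1 : ℝ) + f p.2 ≤ m} =
      (fun a => (0, a)) '' {a | f a ≤ m} ∪
        (fun p => (p.1 + 1, p.2)) '' {p : ℕ × α | 2 * (p.1 : ℝ) + f p.2 ≤ m - 2} := by
  ext ⟨u, a⟩
  cases u with
  | zero => simp
  | succ u =>
    simp only [mem_ofPred_eq, mem_union, mem_image, Prod.mk.injEq, Prod.exists]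
    constructor
    · intro h
      exact Or.inr ⟨u, a, by push_cast at h; linarith, rfl, rfl⟩
    · rintro (⟨_, _, h, _⟩ | ⟨v, b, hv, hvu, rfl⟩)
      · exact absurd h.symm (Nat.succ_ne_zero u)
      · cases Nat.succ_injective hvu
        push_cast
        linarith

theorem encard_setOf_two_mul_add_le (f : α → ℝ) (m : ℝ) :
    {p : ℕ × α | 2 * (p.1 : ℝ) + f p.2 ≤ m}.encard =
      {a | f a ≤ m}.encard + {p : ℕ × α | 2 * (p.1 : ℝ) + f p.2 ≤ m - 2}.encard := by
  have hshift : Function.Injective fun p : ℕ × α => (p.1 + 1, p.2) :=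
    fun p p' h => Prod.ext (Nat.succ_injective (congrArg Prod.fst h)) (congrArg Prod.snd h :)
  rw [setOf_two_mul_add_le_eq_union, encard_union_eq (disjoint_iff_forall_ne.2 ?_),
    (Prod.mk_right_injective 0).encard_image, hshift.encard_image]
  rintro _ ⟨a, -, rfl⟩ _ ⟨p, -, rfl⟩ h
  exact Nat.succ_ne_zero p.1 (congrArg Prod.fst h).symm

theorem encard_setOf_two_mul_add_le_of_lt_two {f : α → ℝ} (hf : ∀ a, 0 ≤ f a) {m : ℝ}
    (hm : m < 2) :
    {p : ℕ × α | 2 * (p.1 : ℝ) + f p.2 ≤ m}.encard = {a | f a ≤ m}.encard := by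
  have hempty : {p : ℕ × α | 2 * (p.1 : ℝ) + f p.2 ≤ m - 2} = ∅ :=
    eq_empty_of_forall_notMem fun p hp => by
      have := hf p.2
      have := Nat.cast_nonneg (α := ℝ) p.1
      simp only [mem_ofPred_eq] at hp
      linarith
  rw [encard_setOf_two_mul_add_le, hempty, encard_empty, add_zero]

end Lift

theorem setOf_abs_add_mul_le {q : ℝ} (hq : |q| < 1) (m : ℝ) :
    {w : ℤ | |(w : ℝ)| + q * w ≤ m} = Icc (-⌊m / (1 - q)⌋) ⌊m / (1 + q)⌋ := by
  obtain ⟨hq₁, hq₂⟩ := abs_lt.1 hq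
  ext w
  simp only [mem_ofPred_eq, mem_Icc, neg_le, Int.le_floor, le_div_iff₀ (by linarith : 0 < 1 - q),
    le_div_iff₀ (by linarith : 0 < 1 + q)]
  push_cast
  rcases le_or_gt 0 (w : ℝ) with hw | hw
  · rw [abs_of_nonneg hw]
    constructor
    · intro h; constructor <;> nlinarith
    · intro h; linarith [h.2]
  · rw [abs_of_neg hw]
    constructor
    · intro h; constructor <;> nlinarith
    · intro h; linarith [h.1]

theorem setOf_abs_add_mul_le_zero {q : ℝ} (hq : |q| < 1) :
    {w : ℤ | |(w : ℝ)| + q * w ≤ 0} = {0} := by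
  simp [setOf_abs_add_mul_le hq]

theorem abs_add_mul_nonneg {q : ℝ} (hq : |q| ≤ 1) (w : ℝ) : 0 ≤ |w| + q * w := by
  have := neg_abs_le (q * w)
  rw [abs_mul] at this
  nlinarith [abs_nonneg w]

theorem Int.floor_add_floor_of_irrational {x y : ℝ} (hx : Irrational x) {n : ℤ}
    (hxy : x + y = n) : ⌊x⌋ + ⌊y⌋ = n - 1 := by
  have hceil : ⌈x⌉ = ⌊x⌋ + 1 :=
    (Int.ceil_eq_floor_add_one_iff_notMem x).2 fun ⟨k, hk⟩ => hx.ne_int k hk.symm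
  rw [eq_sub_of_add_eq' hxy, ← neg_add_eq_sub, Int.floor_add_intCast, Int.floor_neg, hceil]
  ring

theorem abs_sqrt_two_div_two_lt_one : |√2 / 2| < 1 := by
  rw [abs_of_pos (by positivity), div_lt_one two_pos, Real.sqrt_lt' two_pos]
  norm_num

theorem encard_setOf_abs_add_sqrt_two_mul_le {m : ℕ} (hm : 0 < m) :
    {w : ℤ | |(w : ℝ)| + √2 / 2 * w ≤ m}.encard = 4 * m := by
  have hsq : √2 * √2 = 2 := Real.mul_self_sqrt zero_le_two
  have hsq_lt : √2 < 2 := by nlinarith [Real.sqrt_nonneg 2]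
  have hminus : (m : ℝ) / (1 - √2 / 2) = m * (2 + √2) := by
    rw [div_eq_iff (by linarith)]
    linear_combination (m / 2 : ℝ) * hsq
  have hplus : (m : ℝ) / (1 + √2 / 2) = m * (2 - √2) := by
    rw [div_eq_iff (by positivity)]
    linear_combination (m / 2 : ℝ) * hsq
  have hirr : Irrational (m * (2 - √2)) := by
    simpa using (irrational_sqrt_two.natCast_sub 2).natCast_mul hm.ne'
  have hfloor := Int.floor_add_floor_of_irrational hirr (y := m * (2 + √2)) (n := 4 * m)
    (by push_cast; ring)
  rw [setOf_abs_add_mul_le abs_sqrt_two_div_two_lt_one, hplus, hminus, ← Finset.coe_Icc,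
    encard_coe_eq_coe_finsetCard, Int.card_Icc, sub_neg_eq_add,
    show ⌊m * (2 - √2)⌋ + 1 + ⌊m * (2 + √2)⌋ = ((4 * m : ℕ) : ℤ) by push_cast; linarith,
    Int.toNat_natCast]
  push_cast
  rfl

def natProdIntEquiv : ℕ × ℤ ≃ ℕ × ℕ where
  toFun p := (p.1 + (-p.2).toNat, p.1 + p.2.toNat)
  invFun p := (min p.1 p.2, (p.2 : ℤ) - p.1)
  left_inv := by
    rintro ⟨u, w⟩
    ext <;> simp only <;> omega
  right_inv := by
    rintro ⟨y, z⟩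
    ext <;> simp only <;> omega

theorem sub_mul_add_add_mul_natProdIntEquiv (q : ℝ) (p : ℕ × ℤ) :
    (1 - q) * ((natProdIntEquiv p).1 : ℝ) + (1 + q) * (natProdIntEquiv p).2 =
      2 * (p.1 : ℝ) + (|(p.2 : ℝ)| + q * p.2) := by
  obtain ⟨u, w⟩ := p
  have hsum : ((natProdIntEquiv (u, w)).1 : ℤ) + (natProdIntEquiv (u, w)).2 = 2 * u + |w| := by
    simp only [natProdIntEquiv, Equiv.coe_fn_mk]
    rcases abs_cases w with ⟨h, _⟩ | ⟨h, _⟩ <;> omega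
  have hdiff : ((natProdIntEquiv (u, w)).2 : ℤ) - (natProdIntEquiv (u, w)).1 = w := by
    simp only [natProdIntEquiv, Equiv.coe_fn_mk]
    omega
  have hsum' : ((natProdIntEquiv (u, w)).1 : ℝ) + (natProdIntEquiv (u, w)).2 =
      2 * u + |(w : ℝ)| := mod_cast hsum
  have hdiff' : ((natProdIntEquiv (u, w)).2 : ℝ) - (natProdIntEquiv (u, w)).1 = w :=
    mod_cast hdiff
  linear_combination hsum' + q * hdiff'

theorem encard_setOf_sub_mul_add_add_mul_le (q m : ℝ) :
    {p : ℕ × ℕ | (1 - q) * (p.1 : ℝ) + (1 + q) * p.2 ≤ m}.encard =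
      {p : ℕ × ℤ | 2 * (p.1 : ℝ) + (|(p.2 : ℝ)| + q * p.2) ≤ m}.encard := by
  rw [← encard_preimage_of_bijective natProdIntEquiv.bijective]
  congr 1
  ext p
  simp only [mem_preimage, mem_ofPred_eq, sub_mul_add_add_mul_natProdIntEquiv]

theorem encard_setOf_triangle (m : ℕ) :
    {p : ℕ × ℕ | (1 - √2 / 2) * (p.1 : ℝ) + (1 + √2 / 2) * p.2 ≤ m}.encard = (m + 1) ^ 2 := by
  have hq := abs_sqrt_two_div_two_lt_one
  have hφ : ∀ w : ℤ, 0 ≤ |(w : ℝ)| + √2 / 2 * w := fun w => abs_add_mul_nonneg hq.le w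
  rw [encard_setOf_sub_mul_add_add_mul_le]
  induction m using Nat.twoStepInduction with
  | zero =>
    rw [Nat.cast_zero, encard_setOf_two_mul_add_le_of_lt_two hφ two_pos,
      setOf_abs_add_mul_le_zero hq]
    simp
  | one =>
    rw [encard_setOf_two_mul_add_le_of_lt_two hφ (by norm_num),
      encard_setOf_abs_add_sqrt_two_mul_le one_pos]
    norm_num
  | more n ih _ =>
    rw [encard_setOf_two_mul_add_le (fun w : ℤ => |(w : ℝ)| + √2 / 2 * w),
      encard_setOf_abs_add_sqrt_two_mul_le (by omega),
      show ((n + 2 : ℕ) : ℝ) - 2 = n by push_cast; ring, ih]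
    push_cast
    ring

theorem encard_setOf_tetrahedron (t : ℕ) :
    6 * {p : ℕ × ℕ × ℕ | 2 * (p.1 : ℝ) + (1 - √2 / 2) * p.2.1 + (1 + √2 / 2) * p.2.2 ≤ t}.encard =
      ((t + 1) * (t + 2) * (t + 3) : ℕ) := by
  obtain ⟨hq₁, hq₂⟩ := abs_lt.1 abs_sqrt_two_div_two_lt_one
  have hg : ∀ p : ℕ × ℕ, 0 ≤ (1 - √2 / 2) * (p.1 : ℝ) + (1 + √2 / 2) * p.2 := fun p =>
    add_nonneg (mul_nonneg (by linarith) p.1.cast_nonneg) (mul_nonneg (by linarith) p.2.cast_nonneg)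
  simp_rw [add_assoc]
  induction t using Nat.twoStepInduction with
  | zero =>
    have h0 := encard_setOf_triangle 0
    rw [Nat.cast_zero] at h0
    rw [Nat.cast_zero, encard_setOf_two_mul_add_le_of_lt_two hg two_pos, h0]
    norm_num
  | one =>
    rw [encard_setOf_two_mul_add_le_of_lt_two hg (by norm_num), encard_setOf_triangle]
    norm_num
  | more n ih _ =>
    rw [encard_setOf_two_mul_add_le
      (fun p : ℕ × ℕ => (1 - √2 / 2) * (p.1 : ℝ) + (1 + √2 / 2) * p.2), encard_setOf_triangle,
      show ((n + 2 : ℕ) : ℝ) - 2 = n by push_cast; ring, mul_add, ih]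
    push_cast
    ring

theorem stmt_19_general (t : ℕ) :
    6 * ehrhart3 2 (1 - Real.sqrt 2 / 2) (1 + Real.sqrt 2 / 2) t =
      t ^ 3 + 6 * t ^ 2 + 11 * t + 6 := by
  have h := congrArg ENat.toNat (encard_setOf_tetrahedron t)
  rw [ENat.toNat_mul, ENat.toNat_ofNat, ENat.toNat_natCast] at h
  rw [ehrhart3, ncard_def, h]
  ring

/-- The Ehrhart function of the irrational tetrahedron with vertices
`(0,0,0),(1/2,0,0),(0,2+√2,0),(0,0,2−√2)` is `t³/6 + t² + 11t/6 + 1`. -/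
theorem stmt_19 (t : ℕ) (ht : 0 < t) :
    6 * ehrhart3 2 (1 - Real.sqrt 2 / 2) (1 + Real.sqrt 2 / 2) t =
      t ^ 3 + 6 * t ^ 2 + 11 * t + 6 :=
  stmt_19_general t
end
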